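/- Let Δp, Δf, Δg, Δt : ℝ → ℝ satisfy Δp′ = 2a_θ, Δf′ = a_r sin L + 2a_θ cos L, Δg′ = −a_r cos L + 2a_θ sin L, Δt′ = 1.5Δp − 2Δf cos L − 2Δg sin L on [L₀, L_f], with boundary conditions Δp(L₀) = Δf(L₀) = Δg(L₀) = 0, Δt(L₀) = 0, and Δp(L_f) = Δf(L_f) = Δg(L_f) = 0. Then Δt(L_f) = ∫_{L₀}^{L_f} (2a_r − 3L a_θ) dL. -/

import Mathlib

/-!
Integrating `Δt′` by parts against the equations for `Δp, Δf, Δg` amounts to the observation that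
`Δt − 1.5 L Δp + 2 Δf sin L − 2 Δg cos L` has derivative `2 a_r − 3 L a_θ`: the terms in
`Δp, Δf, Δg` cancel, and the `a_r` terms combine via `sin² L + cos² L = 1`. The boundary
conditions make this potential vanish at `L₀` and equal `Δt` at `L_f`.
-/

open Real

noncomputable def rephasingPotential (Δp Δf Δg Δt : ℝ → ℝ) (L : ℝ) : ℝ :=
  Δt L - 1.5 * L * Δp L + 2 * Δf L * sin L - 2 * Δg L * cos L

theorem hasDerivAt_rephasingPotential {Δp Δf Δg Δt : ℝ → ℝ} {ar aθ L : ℝ}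
    (hp : HasDerivAt Δp (2 * aθ) L)
    (hf : HasDerivAt Δf (ar * sin L + 2 * aθ * cos L) L)
    (hg : HasDerivAt Δg (-ar * cos L + 2 * aθ * sin L) L)
    (ht : HasDerivAt Δt (1.5 * Δp L - 2 * Δf L * cos L - 2 * Δg L * sin L) L) :
    HasDerivAt (rephasingPotential Δp Δf Δg Δt) (2 * ar - 3 * L * aθ) L := by
  have hLp := ((hasDerivAt_id L).const_mul 1.5).mul hp
  have hfsin := (hf.const_mul 2).mul (hasDerivAt_sin L)
  have hgcos := (hg.const_mul 2).mul (hasDerivAt_cos L)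
  have h : HasDerivAt (rephasingPotential Δp Δf Δg Δt) _ L := ((ht.sub hLp).add hfsin).sub hgcos
  refine h.congr_deriv ?_
  simp only [id]
  linear_combination 2 * ar * sin_sq_add_cos_sq L

/-- For the linearized Sundman-transformed equations of motion with zero boundary
conditions on Δp, Δf, Δg, the final time difference is
Δt(L_f) = ∫_{L₀}^{L_f} (2 a_r − 3 L a_θ) dL. -/
theorem delta_t_integral (L₀ Lf : ℝ) (hL : L₀ ≤ Lf)
    (Δp Δf Δg Δt ar aθ : ℝ → ℝ)
    (har : Continuous ar) (haθ : Continuous aθ)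
    (hΔp : ∀ L ∈ Set.Icc L₀ Lf, HasDerivAt Δp (2 * aθ L) L)
    (hΔf : ∀ L ∈ Set.Icc L₀ Lf,
      HasDerivAt Δf (ar L * Real.sin L + 2 * aθ L * Real.cos L) L)
    (hΔg : ∀ L ∈ Set.Icc L₀ Lf,
      HasDerivAt Δg (-(ar L) * Real.cos L + 2 * aθ L * Real.sin L) L)
    (hΔt : ∀ L ∈ Set.Icc L₀ Lf,
      HasDerivAt Δt (1.5 * Δp L - 2 * Δf L * Real.cos L - 2 * Δg L * Real.sin L) L)
    (hp0 : Δp L₀ = 0) (hf0 : Δf L₀ = 0) (hg0 : Δg L₀ = 0) (ht0 : Δt L₀ = 0)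
    (hpf : Δp Lf = 0) (hff : Δf Lf = 0) (hgf : Δg Lf = 0) :
    Δt Lf = ∫ L in L₀..Lf, 2 * ar L - 3 * L * aθ L := by
  have hderiv : ∀ L ∈ Set.uIcc L₀ Lf,
      HasDerivAt (rephasingPotential Δp Δf Δg Δt) (2 * ar L - 3 * L * aθ L) L := by
    intro L hLmem
    rw [Set.uIcc_of_le hL] at hLmem
    exact hasDerivAt_rephasingPotential (hΔp L hLmem) (hΔf L hLmem) (hΔg L hLmem) (hΔt L hLmem)
  have hint : IntervalIntegrable (fun L => 2 * ar L - 3 * L * aθ L) MeasureTheory.volume L₀ Lf :=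
    (by fun_prop : Continuous fun L => 2 * ar L - 3 * L * aθ L).intervalIntegrable L₀ Lf
  rw [intervalIntegral.integral_eq_sub_of_hasDerivAt hderiv hint]
  simp [rephasingPotential, hp0, hf0, hg0, ht0, hpf, hff, hgf]
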